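/- Under the Crammer–Singer KKT conditions, let i be a Type 1 support vector and let γ_i : Fin L → ℝ satisfy Σ_k γ_{ik} = 0 and γ_{ik} = 0 whenever α_{ik} = 0 and k ≠ y_i. Then Σ_k γ_{ik}[Σ_j α_{jk}⟨x_i,x_j⟩ + e_{ik}] = 0. -/

import Mathlib

/-!
Since `α_{iy_i} = C_i - η_{iy_i} < C_i`, the multiplier `η_{iy_i}` is positive, and complementary
slackness at `l = y_i` (where the margin and `e_{iy_i}` vanish) forces `ξ_i = 0`. Every `k` in the
support of `γ_i` then has `η_{ik} > 0`, so complementary slackness at `k` makes the bracket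
`Σ_j α_{jk}⟨x_i,x_j⟩ + e_{ik}` equal to the common value `Σ_j α_{jy_i}⟨x_i,x_j⟩`
(Lemma A.1(ii)); as `Σ_k γ_{ik} = 0`, the sum vanishes.
-/

open Finset

lemma sum_mul_eq_zero_of_eq_const_on_support {ι R : Type*} [Fintype ι]
    [NonUnitalNonAssocSemiring R] {γ f : ι → R} {c : R} (hγ : ∑ k, γ k = 0)
    (hf : ∀ k, γ k ≠ 0 → f k = c) :
    ∑ k, γ k * f k = 0 :=
  calc ∑ k, γ k * f k = ∑ k, γ k * c := sum_congr rfl fun k _ => by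
        by_cases h : γ k = 0
        · simp [h]
        · rw [hf k h]
    _ = 0 := by rw [← sum_mul, hγ, zero_mul]

lemma sum_sum_mul_mul_eq_sum_mul_sum {ι D R : Type*} [Fintype ι] [Fintype D] [CommSemiring R]
    (a : ι → R) (u : ι → D → R) (v : D → R) :
    ∑ r, (∑ j, a j * u j r) * v r = ∑ j, a j * ∑ r, v r * u j r := by
  simp only [sum_mul, mul_sum]
  rw [sum_comm]
  exact sum_congr rfl fun j _ => sum_congr rfl fun r _ => by ring

lemma margin_eq_of_slack_eq_zero_of_pos {ι Λ D : Type*} [Fintype ι] [Fintype D]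
    {x : ι → D → ℝ} {y : ι → Λ} {η : ι → Λ → ℝ} {ξ : ι → ℝ} {α e : ι → Λ → ℝ}
    {w : Λ → D → ℝ} (hw : ∀ l r, w l r = ∑ j, α j l * x j r) {i : ι} {k : Λ}
    (hcs : η i k * ((∑ r, (w (y i) r - w k r) * x i r) - e i k + ξ i) = 0)
    (hξ : ξ i = 0) (hη : 0 < η i k) :
    ∑ j, α j k * (∑ r, x i r * x j r) + e i k = ∑ j, α j (y i) * (∑ r, x i r * x j r) := by
  have h := (mul_eq_zero.1 hcs).resolve_left hη.ne'
  simp only [hξ, add_zero, sub_mul, sum_sub_distrib, hw, sum_sum_mul_mul_eq_sum_mul_sum] at h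
  linarith

theorem lemmaA1_iii_general (n L d : ℕ) (x : Fin n → Fin d → ℝ) (y : Fin n → Fin L)
    (Cc : Fin n → ℝ) (η : Fin n → Fin L → ℝ) (ξ : Fin n → ℝ)
    (α : Fin n → Fin L → ℝ) (e : Fin n → Fin L → ℝ) (w : Fin L → Fin d → ℝ)
    (hα : ∀ i l, α i l = Cc i * (if l = y i then 1 else 0) - η i l)
    (he : ∀ i l, e i l = 1 - (if l = y i then 1 else 0))
    (hw : ∀ l r, w l r = ∑ j, α j l * x j r)
    (hη : ∀ i l, 0 ≤ η i l)
    (hcs : ∀ i l, η i l * ((∑ r, (w (y i) r - w l r) * x i r) - e i l + ξ i) = 0)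
    (i : Fin n) (hSV1 : 0 < α i (y i) ∧ α i (y i) < Cc i)
    (γi : Fin L → ℝ) (hγsum : ∑ k, γi k = 0)
    (hγzero : ∀ k, α i k = 0 → k ≠ y i → γi k = 0) :
    ∑ k, γi k * ((∑ j, α j k * (∑ r, x i r * x j r)) + e i k) = 0 := by
  have hηy : 0 < η i (y i) := by
    have := hα i (y i)
    simp only [if_pos, mul_one] at this
    linarith [hSV1.2]
  have hξi : ξ i = 0 := by
    simpa [he] using (mul_eq_zero.1 (hcs i (y i))).resolve_left hηy.ne'
  have hηk : ∀ k, γi k ≠ 0 → 0 < η i k := by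
    intro k hγ
    by_cases hk : k = y i
    · exact hk ▸ hηy
    · refine (hη i k).lt_of_ne' fun h0 => hγ (hγzero k ?_ hk)
      simp [hα, hk, h0]
  exact sum_mul_eq_zero_of_eq_const_on_support hγsum fun k hγ =>
    margin_eq_of_slack_eq_zero_of_pos hw (hcs i k) hξi (hηk k hγ)

/-- Lemma A.1(iii): for a Type 1 support vector `i` and any `γ_i` with `Σ_k γ_{ik} = 0`
and `γ_{ik} = 0` whenever `α_{ik} = 0` and `k ≠ y_i`, we have
`Σ_k γ_{ik} [Σ_j α_{jk} ⟨x_i, x_j⟩ + e_{ik}] = 0`. -/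
theorem lemmaA1_iii (n L d : ℕ) (x : Fin n → Fin d → ℝ) (y : Fin n → Fin L)
    (Cc : Fin n → ℝ) (η : Fin n → Fin L → ℝ) (ξ : Fin n → ℝ)
    (α : Fin n → Fin L → ℝ) (e : Fin n → Fin L → ℝ) (w : Fin L → Fin d → ℝ)
    (hCc : ∀ i, 0 < Cc i)
    (hα : ∀ i l, α i l = Cc i * (if l = y i then 1 else 0) - η i l)
    (he : ∀ i l, e i l = 1 - (if l = y i then 1 else 0))
    (hw : ∀ l r, w l r = ∑ j, α j l * x j r)
    (hη : ∀ i l, 0 ≤ η i l) (hsum : ∀ i, ∑ l, η i l = Cc i)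
    (hξ : ∀ i, 0 ≤ ξ i)
    (hfeas : ∀ i l, (∑ r, (w (y i) r - w l r) * x i r) ≥ e i l - ξ i)
    (hcs : ∀ i l, η i l * ((∑ r, (w (y i) r - w l r) * x i r) - e i l + ξ i) = 0)
    (i : Fin n) (hSV1 : 0 < α i (y i) ∧ α i (y i) < Cc i)
    (γi : Fin L → ℝ) (hγsum : ∑ k, γi k = 0)
    (hγzero : ∀ k, α i k = 0 → k ≠ y i → γi k = 0) :
    ∑ k, γi k * ((∑ j, α j k * (∑ r, x i r * x j r)) + e i k) = 0 :=
  lemmaA1_iii_general n L d x y Cc η ξ α e w hα he hw hη hcs i hSV1 γi hγsum hγzero
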